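/- arXiv:2603.13805 — 2 statements merged into one kernel-verified Lean document; each statement's English description precedes it below -/
import Mathlib

section
/- Let Y be a compact metric space and c: [0,1] × Y → ℝ^{N×N} a continuous function with c(x,y) = O(x^δ) uniformly in y for some δ > 0 (i.e., |c(x,y)| ≤ C x^δ). Given u₀ ∈ C⁰(Y; ℝᴺ), the initial value problem x·∂ₓu + c·u = 0, u(0,y) = u₀(y), admits a unique continuous solution u: [0,1] × Y → ℝᴺ. Moreover the solution is the uniform limit of the Picard iterates uₖ₊₁(x,y) = u₀(y) + ∫₀ˣ a(s,y) uₖ(s,y) ds, where a = −c/x, and satisfies |u(x,y) − u₀(y)| ≤ C' x^δ. -/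
/-!
Write the equation as `∂ₓu = a u` with `a = -c/x`; the bound `c = O(x^δ)` becomes
`‖a(x, y)‖ ≤ M x^(δ-1)`, integrable at `0`. Integrating against `a` turns the term
`B (M x^δ/δ)^k / k!` of an exponential series into the next one. Hence the increments of the Picard
iterates for `u = u₀ + ∫₀ˣ a u` are summable uniformly on `[0, T] × Y`, and their limit solves the
integral equation; the difference of two solutions is bounded and fixed by the integral operator,
so it is bounded by every term of the series and vanishes. The integral equation and the ODE are
equivalent by the fundamental theorem of calculus, and `‖u - u₀‖ ≤ C' x^δ` is the estimate above
with `k = 0` applied to the bounded solution.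
-/

open Matrix Set

/-- `u` is a continuous solution on `[0,1] × Y` of the singular initial value
problem `x·∂ₓu + c·u = 0`, `u(0,y) = u₀(y)`. -/
def IsSingODESol {N : ℕ} {Y : Type*} [TopologicalSpace Y]
    (c : ℝ → Y → Matrix (Fin N) (Fin N) ℝ) (u₀ : Y → Fin N → ℝ)
    (u : ℝ → Y → Fin N → ℝ) : Prop :=
  ContinuousOn (fun p : ℝ × Y => u p.1 p.2) (Icc 0 1 ×ˢ univ) ∧
  (∀ y, u 0 y = u₀ y) ∧
  (∀ y, ∀ x ∈ Ioc (0 : ℝ) 1, ∃ d : Fin N → ℝ,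
    HasDerivAt (fun t => u t y) d x ∧ x • d + (c x y).mulVec (u x y) = 0)

open MeasureTheory Filter Topology Function
open scoped Nat

theorem IsCompact.exists_nonneg_norm_le {α F : Type*} [TopologicalSpace α]
    [SeminormedAddGroup F] {f : α → F} {s : Set α} (hs : IsCompact s) (hf : ContinuousOn f s) :
    ∃ B, 0 ≤ B ∧ ∀ x ∈ s, ‖f x‖ ≤ B :=
  let ⟨B, hB⟩ := hs.exists_bound_of_continuousOn hf
  ⟨max B 0, le_max_right B 0, fun x hx => (hB x hx).trans (le_max_left B 0)⟩

theorem exists_tendstoUniformlyOn_of_norm_sub_le {α E : Type*} [NormedAddCommGroup E]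
    [CompleteSpace E] {F : ℕ → α → E} {b : ℕ → ℝ} {S : Set α} (hb : Summable b)
    (hF : ∀ k, ∀ p ∈ S, ‖F (k + 1) p - F k p‖ ≤ b k) :
    ∃ G, TendstoUniformlyOn F G atTop S := by
  have hF0 : TendstoUniformlyOn (fun _ : ℕ => F 0) (F 0) atTop S :=
    fun _ hu => Eventually.of_forall fun _ _ _ => refl_mem_uniformity hu
  have hsum := tendstoUniformlyOn_tsum_nat (f := fun k p => F (k + 1) p - F k p) hb hF
  refine ⟨_, (hF0.add hsum).congr (Eventually.of_forall fun k p _ => ?_)⟩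
  show F 0 p + ∑ j ∈ Finset.range k, (F (j + 1) p - F j p) = F k p
  rw [Finset.sum_range_sub (fun j => F j p)]
  abel

section SingularIntegral

variable {E : Type*} [NormedAddCommGroup E] [NormedSpace ℝ E]

theorem intervalIntegrable_const_mul_rpow_sub_one (K : ℝ) {q : ℝ} (hq : 0 < q) (x : ℝ) :
    IntervalIntegrable (fun s => K * s ^ (q - 1)) volume 0 x :=
  (intervalIntegral.intervalIntegrable_rpow' (by linarith)).const_mul K

theorem norm_integral_le_of_norm_le_rpow {g : ℝ → E} {K q x : ℝ} (hq : 0 < q) (hx : 0 ≤ x)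
    (hg : ∀ s ∈ Ioc 0 x, ‖g s‖ ≤ K * s ^ (q - 1)) :
    ‖∫ s in 0..x, g s‖ ≤ K * x ^ q / q :=
  calc ‖∫ s in 0..x, g s‖ ≤ ∫ s in 0..x, K * s ^ (q - 1) :=
        intervalIntegral.norm_integral_le_of_norm_le hx (ae_of_all _ hg)
          (intervalIntegrable_const_mul_rpow_sub_one K hq x)
    _ = K * x ^ q / q := by
        rw [intervalIntegral.integral_const_mul, integral_rpow (Or.inl (by linarith)),
          sub_add_cancel, Real.zero_rpow hq.ne', sub_zero, mul_div_assoc]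

theorem continuousOn_primitive_of_dominated {Y : Type*} [TopologicalSpace Y]
    [FirstCountableTopology Y] {g : ℝ → Y → E} {h : ℝ → ℝ} {T : ℝ}
    (hg : ContinuousOn (uncurry g) (Ioc 0 T ×ˢ univ))
    (hgh : ∀ s ∈ Ioc 0 T, ∀ y, ‖g s y‖ ≤ h s) (hh : IntegrableOn h (Ioc 0 T)) :
    ContinuousOn (fun p : ℝ × Y => ∫ s in 0..p.1, g s p.2) (Icc 0 T ×ˢ univ) := by
  -- Extending `g` and `h` by zero off `(0, T]` puts `[0, T]` inside an open interval,
  -- where the dominated primitive is jointly continuous.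
  set G : Y → ℝ → E := fun y => (Ioc 0 T).indicator (fun s => g s y)
  have hG : ∀ y₀, ∀ x₀ ∈ Icc 0 T,
      ContinuousAt (fun q : Y × ℝ => ∫ s in 0..q.2, G q.1 s) (y₀, x₀) := by
    intro y₀ x₀ hx₀
    refine intervalIntegral.continuousAt_parametric_primitive_of_dominated
      ((Ioc 0 T).indicator h) (-1) (T + 1) (fun y => ?_) (Eventually.of_forall fun y => ?_)
      (hh.integrable_indicator measurableSet_Ioc).intervalIntegrable (ae_of_all _ fun s => ?_)
      ⟨by norm_num, by linarith [hx₀.1, hx₀.2]⟩ ⟨by linarith [hx₀.1], by linarith [hx₀.2]⟩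
      Real.volume_singleton
    · exact ((aestronglyMeasurable_indicator_iff measurableSet_Ioc).2
        ((hg.uncurry_right y (mem_univ y)).aestronglyMeasurable measurableSet_Ioc)).restrict
    · refine ae_of_all _ fun s => ?_
      by_cases hs : s ∈ Ioc 0 T
      · simpa [G, hs] using hgh s hs y
      · simp [G, hs]
    · by_cases hs : s ∈ Ioc 0 T
      · simp only [G, indicator_of_mem hs]
        exact (continuousOn_univ.1 (hg.uncurry_left s hs)).continuousAt
      · simp only [G, indicator_of_notMem hs]
        exact continuousAt_const
  have heq : ∀ p ∈ Icc 0 T ×ˢ (univ : Set Y),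
      ∫ s in 0..p.1, g s p.2 = ∫ s in 0..p.1, G p.2 s := by
    refine fun p hp => intervalIntegral.integral_congr_ae (ae_of_all _ fun t ht => ?_)
    rw [uIoc_of_le hp.1.1] at ht
    have htT : t ∈ Ioc 0 T := ⟨ht.1, ht.2.trans hp.1.2⟩
    simp [G, htT]
  rintro ⟨x₀, y₀⟩ hp
  have hcont := (hG y₀ x₀ hp.1).comp (x := (x₀, y₀)) continuous_swap.continuousAt
  exact hcont.continuousWithinAt.congr heq (heq _ hp)

end SingularIntegral

section SingularKernel

variable {E : Type*} [NormedAddCommGroup E] [NormedSpace ℝ E] {Y : Type*}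

noncomputable section

def picardIntegral (A : ℝ → Y → E →L[ℝ] E) (w : ℝ → Y → E) (x : ℝ) (y : Y) : E :=
  ∫ s in 0..x, A s y (w s y)

def picardIter (A : ℝ → Y → E →L[ℝ] E) (u₀ : Y → E) : ℕ → ℝ → Y → E
  | 0 => fun _ y => u₀ y
  | k + 1 => fun x y => u₀ y + picardIntegral A (picardIter A u₀ k) x y

end

theorem picardIter_succ (A : ℝ → Y → E →L[ℝ] E) (u₀ : Y → E) (k : ℕ) (x : ℝ) (y : Y) :
    picardIter A u₀ (k + 1) x y = u₀ y + picardIntegral A (picardIter A u₀ k) x y :=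
  rfl

theorem picardIter_zero (A : ℝ → Y → E →L[ℝ] E) (u₀ : Y → E) (x : ℝ) (y : Y) :
    picardIter A u₀ 0 x y = u₀ y :=
  rfl

theorem eq_picardIter {A : ℝ → Y → E →L[ℝ] E} {u₀ : Y → E} {v : ℕ → ℝ → Y → E}
    (hv₀ : ∀ x y, v 0 x y = u₀ y)
    (hv : ∀ k x y, v (k + 1) x y = u₀ y + picardIntegral A (v k) x y) :
    v = picardIter A u₀ := by
  funext k
  induction k with
  | zero => funext x y; exact hv₀ x y
  | succ k ih => funext x y; rw [hv, ih]; rfl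

variable [TopologicalSpace Y]

structure IsSingularKernel (A : ℝ → Y → E →L[ℝ] E) (T M δ : ℝ) : Prop where
  pos : 0 < δ
  nonneg : 0 ≤ M
  continuousOn : ContinuousOn (uncurry A) (Ioc 0 T ×ˢ univ)
  norm_le : ∀ s ∈ Ioc 0 T, ∀ y, ‖A s y‖ ≤ M * s ^ (δ - 1)

def IsMildSolution (A : ℝ → Y → E →L[ℝ] E) (u₀ : Y → E) (T : ℝ) (u : ℝ → Y → E) : Prop :=
  ContinuousOn (uncurry u) (Icc 0 T ×ˢ univ) ∧
    ∀ x ∈ Icc 0 T, ∀ y, u x y = u₀ y + picardIntegral A u x y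

namespace IsSingularKernel

variable {A : ℝ → Y → E →L[ℝ] E} {T M δ : ℝ} {v w w₁ w₂ : ℝ → Y → E}

theorem mono (hA : IsSingularKernel A T M δ) {T' : ℝ} (hT' : T' ≤ T) :
    IsSingularKernel A T' M δ where
  pos := hA.pos
  nonneg := hA.nonneg
  continuousOn := hA.continuousOn.mono (prod_mono (Ioc_subset_Ioc_right hT') subset_rfl)
  norm_le s hs := hA.norm_le s ⟨hs.1, hs.2.trans hT'⟩

theorem norm_picardIntegral_le (hA : IsSingularKernel A T M δ) {B x : ℝ} (k : ℕ)
    (hx : x ∈ Icc 0 T) (y : Y)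
    (hw : ∀ s ∈ Ioc 0 x, ‖w s y‖ ≤ B * (M * s ^ δ / δ) ^ k / k !) :
    ‖picardIntegral A w x y‖ ≤ B * (M * x ^ δ / δ) ^ (k + 1) / (k + 1)! := by
  have hδ := hA.pos
  have hq : 0 < δ * (k + 1) := by positivity
  set K := B * M ^ (k + 1) / (δ ^ k * k !) with hK
  have hbound : ∀ s ∈ Ioc 0 x, ‖A s y (w s y)‖ ≤ K * s ^ (δ * (k + 1) - 1) := by
    intro s hs
    have hAs := hA.norm_le s ⟨hs.1, hs.2.trans hx.2⟩ y
    calc ‖A s y (w s y)‖ ≤ M * s ^ (δ - 1) * (B * (M * s ^ δ / δ) ^ k / k !) :=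
          (A s y).le_of_opNorm_le_of_le hAs (hw s hs)
      _ = K * (s ^ (δ - 1) * (s ^ δ) ^ k) := by rw [hK, div_pow, mul_pow]; field_simp; ring
      _ = K * s ^ (δ * (k + 1) - 1) := by
          rw [← Real.rpow_mul_natCast hs.1.le, ← Real.rpow_add hs.1]
          ring_nf
  calc ‖picardIntegral A w x y‖ ≤ K * x ^ (δ * (k + 1)) / (δ * (k + 1)) :=
        norm_integral_le_of_norm_le_rpow hq hx.1 hbound
    _ = B * (M * x ^ δ / δ) ^ (k + 1) / (k + 1)! := by
        have hpow : x ^ (δ * (k + 1)) = (x ^ δ) ^ (k + 1) := by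
          rw [Real.rpow_mul hx.1]; exact_mod_cast Real.rpow_natCast (x ^ δ) (k + 1)
        rw [hpow, hK, Nat.factorial_succ, div_pow, mul_pow]
        push_cast
        field_simp
        ring

theorem continuousOn_apply (hA : IsSingularKernel A T M δ)
    (hw : ContinuousOn (uncurry w) (Icc 0 T ×ˢ univ)) :
    ContinuousOn (fun p : ℝ × Y => A p.1 p.2 (w p.1 p.2)) (Ioc 0 T ×ˢ univ) :=
  hA.continuousOn.clm_apply (hw.mono (prod_mono Ioc_subset_Icc_self subset_rfl))

theorem norm_apply_le (hA : IsSingularKernel A T M δ) {W : ℝ}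
    (hw : ∀ x ∈ Icc 0 T, ∀ y, ‖w x y‖ ≤ W) {s : ℝ} (hs : s ∈ Ioc 0 T) (y : Y) :
    ‖A s y (w s y)‖ ≤ M * W * s ^ (δ - 1) := by
  rw [mul_right_comm]
  exact (A s y).le_of_opNorm_le_of_le (hA.norm_le s hs y) (hw s (Ioc_subset_Icc_self hs) y)

theorem intervalIntegrable (hA : IsSingularKernel A T M δ)
    (hw : ContinuousOn (uncurry w) (Icc 0 T ×ˢ univ)) {x : ℝ} (hx : x ∈ Icc 0 T) (y : Y) :
    IntervalIntegrable (fun s => A s y (w s y)) volume 0 x := by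
  obtain ⟨W, -, hW⟩ := isCompact_Icc.exists_nonneg_norm_le (hw.uncurry_right y (mem_univ y))
  have hsub : Ioc 0 x ⊆ Ioc 0 T := Ioc_subset_Ioc_right hx.2
  refine (intervalIntegrable_const_mul_rpow_sub_one (M * W) hA.pos x).mono_fun' ?_ ?_
  · rw [uIoc_of_le hx.1]
    exact (((hA.continuousOn_apply hw).uncurry_right (f := fun s y => A s y (w s y)) y
      (mem_univ y)).mono hsub).aestronglyMeasurable measurableSet_Ioc
  · rw [uIoc_of_le hx.1]
    exact (ae_restrict_iff' measurableSet_Ioc).2 (ae_of_all _ fun s hs =>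
      hA.norm_apply_le (W := W) (fun x hx _ => hW x hx) (hsub hs) y)

theorem continuousOn_picardIntegral [CompactSpace Y] [FirstCountableTopology Y]
    (hA : IsSingularKernel A T M δ) (hw : ContinuousOn (uncurry w) (Icc 0 T ×ˢ univ)) :
    ContinuousOn (uncurry (picardIntegral A w)) (Icc 0 T ×ˢ univ) := by
  obtain ⟨W, -, hW⟩ := (isCompact_Icc.prod isCompact_univ).exists_nonneg_norm_le hw
  refine continuousOn_primitive_of_dominated (hA.continuousOn_apply hw)
    (fun s hs y => hA.norm_apply_le (fun x hx y => hW (x, y) ⟨hx, mem_univ y⟩) hs y) ?_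
  exact (intervalIntegrable_iff.1
    (intervalIntegrable_const_mul_rpow_sub_one (M * W) hA.pos T)).mono_set Ioc_subset_uIoc

theorem picardIntegral_sub (hA : IsSingularKernel A T M δ)
    (hw₁ : ContinuousOn (uncurry w₁) (Icc 0 T ×ˢ univ))
    (hw₂ : ContinuousOn (uncurry w₂) (Icc 0 T ×ˢ univ)) {x : ℝ} (hx : x ∈ Icc 0 T) (y : Y) :
    picardIntegral A w₁ x y - picardIntegral A w₂ x y = picardIntegral A (w₁ - w₂) x y := by
  simp only [picardIntegral, Pi.sub_apply, map_sub]
  exact (intervalIntegral.integral_sub (hA.intervalIntegrable hw₁ hx y)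
    (hA.intervalIntegrable hw₂ hx y)).symm

theorem hasDerivAt_picardIntegral [CompleteSpace E] (hA : IsSingularKernel A T M δ)
    (hw : ContinuousOn (uncurry w) (Icc 0 T ×ˢ univ)) {x : ℝ} (hx : x ∈ Ioo 0 T) (y : Y) :
    HasDerivAt (fun t => picardIntegral A w t y) (A x y (w x y)) x := by
  have hcont : ContinuousOn (fun s => A s y (w s y)) (Ioo 0 T) :=
    ((hA.continuousOn_apply hw).uncurry_right (f := fun s y => A s y (w s y)) y
      (mem_univ y)).mono Ioo_subset_Ioc_self
  exact intervalIntegral.integral_hasDerivAt_right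
    (hA.intervalIntegrable hw (Ioo_subset_Icc_self hx) y)
    (hcont.stronglyMeasurableAtFilter isOpen_Ioo x hx)
    (hcont.continuousAt (isOpen_Ioo.mem_nhds hx))

theorem tendsto_picardIntegral (hA : IsSingularKernel A T M δ) {w : ℕ → ℝ → Y → E}
    (hw : ∀ k, ContinuousOn (uncurry (w k)) (Icc 0 T ×ˢ univ))
    (hv : ContinuousOn (uncurry v) (Icc 0 T ×ˢ univ))
    (hwv : TendstoUniformlyOn (fun k => uncurry (w k)) (uncurry v) atTop (Icc 0 T ×ˢ univ))
    {x : ℝ} (hx : x ∈ Icc 0 T) (y : Y) :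
    Tendsto (fun k => picardIntegral A (w k) x y) atTop (𝓝 (picardIntegral A v x y)) := by
  have hM := hA.nonneg
  have hδ := hA.pos
  set K := M * x ^ δ / δ
  have hK : 0 ≤ K := by have := hx.1; positivity
  refine Metric.tendsto_nhds.2 fun ε hε => ?_
  filter_upwards [Metric.tendstoUniformlyOn_iff.1 hwv (ε / (K + 1)) (by positivity)] with k hk
  rw [dist_eq_norm, hA.picardIntegral_sub (hw k) hv hx]
  calc ‖picardIntegral A (w k - v) x y‖ ≤ ε / (K + 1) * K ^ (0 + 1) / (0 + 1)! :=
        hA.norm_picardIntegral_le 0 hx y fun s hs => by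
          simpa [dist_eq_norm'] using (hk (s, y) ⟨⟨hs.1.le, hs.2.trans hx.2⟩, mem_univ y⟩).le
    _ < ε := by
        rw [zero_add, pow_one, Nat.factorial_one, Nat.cast_one, div_one, div_mul_eq_mul_div,
          div_lt_iff₀ (by positivity)]
        nlinarith

theorem continuousOn_picardIter [CompactSpace Y] [FirstCountableTopology Y]
    (hA : IsSingularKernel A T M δ) {u₀ : Y → E} (hu₀ : Continuous u₀) (k : ℕ) :
    ContinuousOn (uncurry (picardIter A u₀ k)) (Icc 0 T ×ˢ univ) := by
  induction k with
  | zero => exact (hu₀.comp continuous_snd).continuousOn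
  | succ k ih =>
    exact (hu₀.comp continuous_snd).continuousOn.add (hA.continuousOn_picardIntegral ih)

theorem norm_picardIter_succ_sub_le [CompactSpace Y] [FirstCountableTopology Y]
    (hA : IsSingularKernel A T M δ) {u₀ : Y → E} (hu₀ : Continuous u₀) {B : ℝ}
    (hB : ∀ y, ‖u₀ y‖ ≤ B) (k : ℕ) {x : ℝ} (hx : x ∈ Icc 0 T) (y : Y) :
    ‖picardIter A u₀ (k + 1) x y - picardIter A u₀ k x y‖ ≤
      B * (M * x ^ δ / δ) ^ (k + 1) / (k + 1)! := by
  induction k generalizing x with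
  | zero =>
    rw [picardIter_succ, picardIter_zero, add_sub_cancel_left]
    exact hA.norm_picardIntegral_le 0 hx y fun s _ => by simpa [picardIter_zero] using hB y
  | succ k ih =>
    rw [picardIter_succ, picardIter_succ, add_sub_add_left_eq_sub, hA.picardIntegral_sub
      (hA.continuousOn_picardIter hu₀ _) (hA.continuousOn_picardIter hu₀ _) hx]
    exact hA.norm_picardIntegral_le (k + 1) hx y fun s hs => ih ⟨hs.1.le, hs.2.trans hx.2⟩

theorem exists_tendstoUniformlyOn_picardIter [CompleteSpace E] [CompactSpace Y]
    [FirstCountableTopology Y] (hA : IsSingularKernel A T M δ) {u₀ : Y → E}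
    (hu₀ : Continuous u₀) :
    ∃ u : ℝ → Y → E, TendstoUniformlyOn (fun k => uncurry (picardIter A u₀ k)) (uncurry u)
      atTop (Icc 0 T ×ˢ univ) := by
  have hM := hA.nonneg
  have hδ := hA.pos
  obtain ⟨B, hB0, hB⟩ := isCompact_univ.exists_nonneg_norm_le hu₀.continuousOn
  have hsum : Summable fun k : ℕ => B * (M * T ^ δ / δ) ^ (k + 1) / (k + 1)! := by
    simpa only [mul_div_assoc] using
      ((summable_nat_add_iff 1).2 (Real.summable_pow_div_factorial _)).mul_left B
  obtain ⟨G, hG⟩ := exists_tendstoUniformlyOn_of_norm_sub_le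
    (F := fun k => uncurry (picardIter A u₀ k)) (S := Icc 0 T ×ˢ univ) hsum fun k p hp =>
    (hA.norm_picardIter_succ_sub_le hu₀ (fun y => hB y (mem_univ y)) k hp.1 p.2).trans
      (by have := hp.1.1; have := hp.1.2; gcongr)
  exact ⟨curry G, by simpa only [uncurry_curry] using hG⟩

theorem isMildSolution_of_tendstoUniformlyOn [CompactSpace Y] [FirstCountableTopology Y]
    (hA : IsSingularKernel A T M δ) {u₀ : Y → E} (hu₀ : Continuous u₀) {u : ℝ → Y → E}
    (hu : TendstoUniformlyOn (fun k => uncurry (picardIter A u₀ k)) (uncurry u) atTop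
      (Icc 0 T ×ˢ univ)) :
    IsMildSolution A u₀ T u := by
  have hcont := hA.continuousOn_picardIter hu₀
  have hucont := hu.continuousOn (Frequently.of_forall hcont)
  refine ⟨hucont, fun x hx y => ?_⟩
  have hlim : Tendsto (fun k => picardIter A u₀ (k + 1) x y) atTop (𝓝 (u x y)) :=
    (hu.tendsto_at (⟨hx, mem_univ y⟩ : (x, y) ∈ Icc 0 T ×ˢ univ)).comp
      (tendsto_add_atTop_nat 1)
  exact tendsto_nhds_unique hlim
    ((hA.tendsto_picardIntegral hcont hucont hu hx y).const_add (u₀ y))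

theorem eq_zero_of_eq_picardIntegral (hA : IsSingularKernel A T M δ) {y : Y}
    (hw : ContinuousOn (fun s => w s y) (Icc 0 T))
    (hw_eq : ∀ x ∈ Icc 0 T, w x y = picardIntegral A w x y) {x : ℝ} (hx : x ∈ Icc 0 T) :
    w x y = 0 := by
  obtain ⟨B, -, hB⟩ := isCompact_Icc.exists_nonneg_norm_le hw
  have hbound : ∀ k : ℕ, ∀ x ∈ Icc 0 T, ‖w x y‖ ≤ B * (M * x ^ δ / δ) ^ k / k ! := by
    intro k
    induction k with
    | zero => simpa using hB
    | succ k ih =>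
      intro x hx
      rw [hw_eq x hx]
      exact hA.norm_picardIntegral_le k hx y fun s hs => ih s ⟨hs.1.le, hs.2.trans hx.2⟩
  have hlim : Tendsto (fun k : ℕ => B * (M * x ^ δ / δ) ^ k / k !) atTop (𝓝 0) := by
    simpa [mul_div_assoc] using (FloorSemiring.tendsto_pow_div_factorial_atTop _).const_mul B
  exact norm_le_zero_iff.1 (ge_of_tendsto' hlim fun k => hbound k x hx)

end IsSingularKernel

namespace IsMildSolution

variable {A : ℝ → Y → E →L[ℝ] E} {T M δ : ℝ} {u₀ : Y → E} {u u₁ u₂ : ℝ → Y → E}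

theorem apply_zero (hu : IsMildSolution A u₀ T u) (hT : 0 ≤ T) (y : Y) : u 0 y = u₀ y := by
  simpa [picardIntegral] using hu.2 0 ⟨le_rfl, hT⟩ y

theorem hasDerivAt [CompleteSpace E] (hu : IsMildSolution A u₀ T u)
    (hA : IsSingularKernel A T M δ) {x : ℝ} (hx : x ∈ Ioo 0 T) (y : Y) :
    HasDerivAt (fun t => u t y) (A x y (u x y)) x := by
  refine ((hA.hasDerivAt_picardIntegral hu.1 hx y).const_add (u₀ y)).congr_of_eventuallyEq ?_
  filter_upwards [isOpen_Ioo.mem_nhds hx] with t ht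
  exact hu.2 t (Ioo_subset_Icc_self ht) y

theorem exists_norm_sub_le_rpow [CompactSpace Y] (hu : IsMildSolution A u₀ T u)
    (hA : IsSingularKernel A T M δ) :
    ∃ C, ∀ x ∈ Icc 0 T, ∀ y, ‖u x y - u₀ y‖ ≤ C * x ^ δ := by
  obtain ⟨W, -, hW⟩ := (isCompact_Icc.prod isCompact_univ).exists_nonneg_norm_le hu.1
  refine ⟨W * M / δ, fun x hx y => ?_⟩
  have hint := hA.norm_picardIntegral_le (B := W) 0 hx y fun s hs => by
    simpa using hW (s, y) ⟨⟨hs.1.le, hs.2.trans hx.2⟩, mem_univ y⟩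
  rw [hu.2 x hx y, add_sub_cancel_left]
  convert hint using 1
  simp only [zero_add, pow_one, Nat.factorial_one, Nat.cast_one, div_one]
  ring

theorem unique (hu₁ : IsMildSolution A u₀ T u₁) (hu₂ : IsMildSolution A u₀ T u₂)
    (hA : IsSingularKernel A T M δ) {x : ℝ} (hx : x ∈ Icc 0 T) (y : Y) : u₁ x y = u₂ x y := by
  refine sub_eq_zero.1 (hA.eq_zero_of_eq_picardIntegral (w := u₁ - u₂)
    ((hu₁.1.sub hu₂.1).uncurry_right (f := u₁ - u₂) y (mem_univ y)) (fun x hx => ?_) hx)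
  rw [Pi.sub_apply, Pi.sub_apply, hu₁.2 x hx y, hu₂.2 x hx y, add_sub_add_left_eq_sub,
    hA.picardIntegral_sub hu₁.1 hu₂.1 hx]

end IsMildSolution

theorem isMildSolution_of_hasDerivAt [CompleteSpace E] {A : ℝ → Y → E →L[ℝ] E} {T M δ : ℝ}
    {u₀ : Y → E} {u : ℝ → Y → E} (hA : IsSingularKernel A T M δ)
    (hu : ContinuousOn (uncurry u) (Icc 0 T ×ˢ univ)) (hu₀ : ∀ y, u 0 y = u₀ y)
    (hderiv : ∀ y, ∀ x ∈ Ioo 0 T, HasDerivAt (fun t => u t y) (A x y (u x y)) x) :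
    IsMildSolution A u₀ T u := by
  refine ⟨hu, fun x hx y => ?_⟩
  rw [picardIntegral, intervalIntegral.integral_eq_sub_of_hasDerivAt_of_le hx.1
    ((hu.uncurry_right y (mem_univ y)).mono (Icc_subset_Icc_right hx.2))
    (fun t ht => hderiv y t ⟨ht.1, ht.2.trans_le hx.2⟩) (hA.intervalIntegrable hu hx y), hu₀]
  abel

end SingularKernel

section MatrixKernel

theorem norm_mulVec_le_of_abs_le {m n : Type*} [Fintype m] [Fintype n] {A : Matrix m n ℝ}
    {K : ℝ} (hK : 0 ≤ K) (hA : ∀ i j, |A i j| ≤ K) (v : n → ℝ) :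
    ‖A *ᵥ v‖ ≤ Fintype.card n * K * ‖v‖ := by
  have hK' : (0 : ℝ) ≤ Fintype.card n * K * ‖v‖ := by positivity
  refine (pi_norm_le_iff_of_nonneg hK').2 fun i => ?_
  calc ‖(A *ᵥ v) i‖ = |∑ j, A i j * v j| := rfl
    _ ≤ ∑ j, |A i j| * |v j| := by
        simpa only [abs_mul] using Finset.abs_sum_le_sum_abs (fun j => A i j * v j) Finset.univ
    _ ≤ ∑ _j : n, K * ‖v‖ := Finset.sum_le_sum fun j _ =>
        mul_le_mul (hA i j) (norm_le_pi_norm v j) (abs_nonneg _) hK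
    _ = Fintype.card n * K * ‖v‖ := by simp [mul_assoc]

variable {n : Type*} [Fintype n] {Y : Type*}

noncomputable def matrixKernel (c : ℝ → Y → Matrix n n ℝ) (s : ℝ) (y : Y) :
    (n → ℝ) →L[ℝ] (n → ℝ) :=
  (-s⁻¹) • LinearMap.toContinuousLinearMap (c s y).mulVecLin

theorem matrixKernel_apply (c : ℝ → Y → Matrix n n ℝ) (s : ℝ) (y : Y) (v : n → ℝ) :
    matrixKernel c s y v = (-s⁻¹) • (c s y) *ᵥ v :=
  rfl

variable [TopologicalSpace Y]

theorem continuous_toContinuousLinearMap_mulVecLin :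
    Continuous fun A : Matrix n n ℝ => LinearMap.toContinuousLinearMap A.mulVecLin :=
  continuous_clm_apply.2 fun _ => continuous_id.matrix_mulVec continuous_const

theorem exists_norm_toContinuousLinearMap_mulVecLin_le_rpow [CompactSpace Y]
    {c : ℝ → Y → Matrix n n ℝ} (hc : Continuous (uncurry c)) {δ C : ℝ} (hδ : 0 < δ)
    (hbound : ∀ x ∈ Icc (0 : ℝ) 1, ∀ y i j, |c x y i j| ≤ C * x ^ δ) (T : ℝ) :
    ∃ M, 0 ≤ M ∧ ∀ s ∈ Ioc 0 T, ∀ y,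
      ‖LinearMap.toContinuousLinearMap (c s y).mulVecLin‖ ≤ M * s ^ δ := by
  obtain ⟨K, hK0, hK⟩ := (isCompact_Icc (a := 1) (b := T)).prod (isCompact_univ (X := Y))
    |>.exists_nonneg_norm_le (continuous_toContinuousLinearMap_mulVecLin.comp hc).continuousOn
  refine ⟨max (Fintype.card n * max C 0) K, by positivity, fun s hs y => ?_⟩
  have hsδ : 0 ≤ s ^ δ := Real.rpow_nonneg hs.1.le δ
  rcases le_total s 1 with hs1 | hs1
  · calc ‖LinearMap.toContinuousLinearMap (c s y).mulVecLin‖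
          ≤ Fintype.card n * (max C 0 * s ^ δ) :=
          ContinuousLinearMap.opNorm_le_bound _ (by positivity) fun v =>
            norm_mulVec_le_of_abs_le (by positivity) (fun i j =>
              (hbound s ⟨hs.1.le, hs1⟩ y i j).trans
                (mul_le_mul_of_nonneg_right (le_max_left C 0) hsδ)) v
      _ ≤ max (Fintype.card n * max C 0) K * s ^ δ := by
          rw [← mul_assoc]
          exact mul_le_mul_of_nonneg_right (le_max_left _ _) hsδ
  · calc ‖LinearMap.toContinuousLinearMap (c s y).mulVecLin‖ ≤ K * 1 :=
          (mul_one K).symm ▸ hK (s, y) ⟨⟨hs1, hs.2⟩, mem_univ y⟩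
      _ ≤ max (Fintype.card n * max C 0) K * s ^ δ :=
          mul_le_mul (le_max_right _ _) (Real.one_le_rpow hs1 hδ.le) zero_le_one (by positivity)

theorem isSingularKernel_matrixKernel [CompactSpace Y] {c : ℝ → Y → Matrix n n ℝ}
    (hc : Continuous (uncurry c)) {δ C : ℝ} (hδ : 0 < δ)
    (hbound : ∀ x ∈ Icc (0 : ℝ) 1, ∀ y i j, |c x y i j| ≤ C * x ^ δ) (T : ℝ) :
    ∃ M, IsSingularKernel (matrixKernel c) T M δ := by
  obtain ⟨M, hM0, hM⟩ := exists_norm_toContinuousLinearMap_mulVecLin_le_rpow hc hδ hbound T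
  refine ⟨M, hδ, hM0, ?_, fun s hs y => ?_⟩
  · exact ((continuousOn_fst.inv₀ fun p hp => hp.1.1.ne').neg).smul
      (continuous_toContinuousLinearMap_mulVecLin.comp hc).continuousOn
  · rw [matrixKernel, norm_smul, norm_neg, norm_inv, Real.norm_of_nonneg hs.1.le,
      Real.rpow_sub_one hs.1.ne']
    calc s⁻¹ * ‖LinearMap.toContinuousLinearMap (c s y).mulVecLin‖ ≤ s⁻¹ * (M * s ^ δ) :=
          mul_le_mul_of_nonneg_left (hM s hs y) (inv_nonneg.2 hs.1.le)
      _ = M * (s ^ δ / s) := by ring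

theorem IsSingODESol.isMildSolution {N : ℕ} {c : ℝ → Y → Matrix (Fin N) (Fin N) ℝ}
    {u₀ : Y → Fin N → ℝ} {u : ℝ → Y → Fin N → ℝ} {M δ : ℝ}
    (hA : IsSingularKernel (matrixKernel c) 1 M δ) (hu : IsSingODESol c u₀ u) :
    IsMildSolution (matrixKernel c) u₀ 1 u := by
  refine isMildSolution_of_hasDerivAt hA hu.1 hu.2.1 fun y x hx => ?_
  obtain ⟨d, hd, hdc⟩ := hu.2.2 y x (Ioo_subset_Ioc_self hx)
  have hd_eq : d = matrixKernel c x y (u x y) := by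
    rw [matrixKernel_apply, eq_neg_of_add_eq_zero_right hdc, smul_neg, neg_smul, neg_neg,
      smul_smul, inv_mul_cancel₀ hx.1.ne', one_smul]
  exact hd_eq ▸ hd

end MatrixKernel

/-- Existence, uniqueness, Picard approximation and a `O(x^δ)` estimate for the
singular initial value problem `x·∂ₓu + c·u = 0`, `u(0,·) = u₀`, on a compact
space `Y`, when `c` is continuous with `‖c(x,y)‖ = O(x^δ)` uniformly, `δ > 0`.
The Picard iterates are `uₖ₊₁(x,y) = u₀(y) + ∫₀ˣ a(s,y)·uₖ(s,y) ds`, with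
`a = −c/x`. -/
theorem singular_ODE_exists_unique
    {N : ℕ} {Y : Type*} [MetricSpace Y] [CompactSpace Y]
    (δ C : ℝ) (hδ : 0 < δ)
    (c : ℝ → Y → Matrix (Fin N) (Fin N) ℝ)
    (hc : Continuous fun p : ℝ × Y => c p.1 p.2)
    (hbound : ∀ x ∈ Icc (0 : ℝ) 1, ∀ y i j, |c x y i j| ≤ C * x ^ δ)
    (u₀ : Y → Fin N → ℝ) (hu₀ : Continuous u₀) :
    (∃ u : ℝ → Y → Fin N → ℝ, IsSingODESol c u₀ u ∧
      (∃ C' : ℝ, ∀ x ∈ Icc (0 : ℝ) 1, ∀ y, ‖u x y - u₀ y‖ ≤ C' * x ^ δ) ∧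
      (∀ v : ℕ → ℝ → Y → Fin N → ℝ,
        (∀ x y, v 0 x y = u₀ y) →
        (∀ k x y, v (k + 1) x y
            = u₀ y + ∫ s in (0 : ℝ)..x, (-(s⁻¹)) • (c s y).mulVec (v k s y)) →
        TendstoUniformlyOn (fun k (p : ℝ × Y) => v k p.1 p.2)
          (fun p : ℝ × Y => u p.1 p.2) Filter.atTop (Icc 0 1 ×ˢ univ))) ∧
    (∀ u₁ u₂ : ℝ → Y → Fin N → ℝ, IsSingODESol c u₀ u₁ → IsSingODESol c u₀ u₂ →
      ∀ x ∈ Icc (0 : ℝ) 1, ∀ y, u₁ x y = u₂ x y) := by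
  -- Solving on `[0, 2]` makes the derivative at `x = 1` two-sided.
  obtain ⟨M, hA⟩ := isSingularKernel_matrixKernel hc hδ hbound 2
  obtain ⟨u, hlim⟩ := hA.exists_tendstoUniformlyOn_picardIter hu₀
  have hu := hA.isMildSolution_of_tendstoUniformlyOn hu₀ hlim
  have hA₁ := hA.mono one_le_two
  have hS : Icc (0 : ℝ) 1 ×ˢ (univ : Set Y) ⊆ Icc 0 2 ×ˢ univ :=
    prod_mono (Icc_subset_Icc_right one_le_two) subset_rfl
  refine ⟨⟨u, ⟨hu.1.mono hS, hu.apply_zero zero_le_two, fun y x hx => ?_⟩, ?_,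
    fun v hv₀ hv => ?_⟩, fun u₁ u₂ h₁ h₂ x hx y =>
      (h₁.isMildSolution hA₁).unique (h₂.isMildSolution hA₁) hA₁ hx y⟩
  · refine ⟨_, hu.hasDerivAt hA ⟨hx.1, hx.2.trans_lt one_lt_two⟩ y, ?_⟩
    rw [matrixKernel_apply, smul_smul, mul_neg, mul_inv_cancel₀ hx.1.ne', neg_one_smul,
      neg_add_cancel]
  · obtain ⟨C', hC'⟩ := hu.exists_norm_sub_le_rpow hA
    exact ⟨C', fun x hx => hC' x ⟨hx.1, hx.2.trans one_le_two⟩⟩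
  · rw [eq_picardIter (A := matrixKernel c) hv₀ hv]
    exact hlim.mono hS
end

section
/- With V, h(x), S(x) as above (oriented 3-dimensional vector space with smooth family of inner products, shape operator S defined by ∂ₓh = −2h(S·,·)), let ⋆(x): Λ¹V* → Λ²V* be the Hodge star of h(x). Then ∂ₓ⋆ = ⋆ ∘ (2 S* − tr S), where S*: V* → V* is the dual of S. -/
/-!
In coordinates the Hodge star on 1-forms is `⋆ = √(det h) • h⁻¹`, the product of the volume
factor and the inverse metric. Jacobi's formula `(det h)' = tr (adj h * h')` gives
`(√(det h))' = ½ √(det h) tr (h⁻¹ h') = -(tr S) √(det h)`, and differentiating the inverse gives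
`(h⁻¹)' = -h⁻¹ h' h⁻¹ = 2 h⁻¹ Sᵀ`, both because `h' = -2 Sᵀ h`. The product rule assembles
`⋆' = ⋆ (2 Sᵀ - tr S)`.
-/

namespace Matrix

variable {n : Type*} [Fintype n] [DecidableEq n]

theorem trace_adjugate_mul_eq_sum_det_updateCol {R : Type*} [CommRing R] (A B : Matrix n n R) :
    (adjugate A * B).trace = ∑ i, (A.updateCol i fun j => B j i).det := by
  simp only [← cramer_apply, cramer_eq_adjugate_mulVec, trace, diag, mul_apply, mulVec, dotProduct]

theorem det_updateCol_eq_sum_perm {R : Type*} [CommRing R] (A : Matrix n n R) (i : n)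
    (b : n → R) :
    (A.updateCol i b).det = ∑ σ : Equiv.Perm n,
      Equiv.Perm.sign σ * ((∏ k ∈ Finset.univ.erase i, A (σ k) k) * b (σ i)) := by
  rw [det_apply']
  refine Finset.sum_congr rfl fun σ _ => ?_
  rw [← Finset.mul_prod_erase _ _ (Finset.mem_univ i), mul_comm (updateCol A i b (σ i) i)]
  congr 2
  · exact Finset.prod_congr rfl fun k hk => by simp [updateCol_ne (Finset.ne_of_mem_erase hk)]
  · simp

theorem hasDerivAt_det {𝕜 : Type*} [NontriviallyNormedField 𝕜] {A : 𝕜 → Matrix n n 𝕜}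
    {A' : Matrix n n 𝕜} {x : 𝕜} (hA : ∀ i j, HasDerivAt (fun t => A t i j) (A' i j) x) :
    HasDerivAt (fun t => (A t).det) ((adjugate (A x) * A').trace) x := by
  have hσ (σ : Equiv.Perm n) := (HasDerivAt.fun_finsetProd (u := Finset.univ)
    fun i _ => hA (σ i) i).const_mul (Equiv.Perm.sign σ : 𝕜)
  rw [show (fun t => (A t).det) = _ from funext fun t => det_apply' (A t)]
  refine (HasDerivAt.fun_sum fun σ _ => hσ σ).congr_deriv ?_
  simp_rw [trace_adjugate_mul_eq_sum_det_updateCol, det_updateCol_eq_sum_perm, Finset.mul_sum,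
    smul_eq_mul]
  exact Finset.sum_comm

theorem hasDerivAt_sqrt_det {A : ℝ → Matrix n n ℝ} {A' : Matrix n n ℝ} {x : ℝ}
    (hA : ∀ i j, HasDerivAt (fun t => A t i j) (A' i j) x) (hx : 0 < (A x).det) :
    HasDerivAt (fun t => √(A t).det) (√(A x).det / 2 * ((A x)⁻¹ * A').trace) x := by
  refine ((hasDerivAt_det hA).sqrt hx.ne').congr_deriv ?_
  have hadj : adjugate (A x) = (A x).det • (A x)⁻¹ := by
    rw [inv_def, Ring.inverse_eq_inv', smul_smul, mul_inv_cancel₀ hx.ne', one_smul]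
  have hsq : √(A x).det ^ 2 = (A x).det := Real.sq_sqrt hx.le
  rw [hadj, smul_mul, trace_smul, smul_eq_mul]
  field_simp
  rw [hsq, mul_comm]

section LinftyOp

-- The ℓ∞ operator norm makes square matrices a complete normed algebra, on which
-- `Ring.inverse` is differentiable at units.
attribute [local instance] Matrix.linftyOpNormedRing Matrix.linftyOpNormedAlgebra

theorem hasDerivAt_of_hasDerivAt_apply {𝕜 : Type*} [NontriviallyNormedField 𝕜]
    {A : 𝕜 → Matrix n n 𝕜} {A' : Matrix n n 𝕜} {x : 𝕜}
    (hA : ∀ i j, HasDerivAt (fun t => A t i j) (A' i j) x) : HasDerivAt A A' x := by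
  have hsum : HasDerivAt (fun t => ∑ i, ∑ j, A t i j • single i j (1 : 𝕜))
      (∑ i, ∑ j, A' i j • single i j (1 : 𝕜)) x :=
    .fun_sum fun i _ => .fun_sum fun j _ => (hA i j).smul_const _
  simpa only [smul_single, smul_eq_mul, mul_one, ← matrix_eq_sum_single] using hsum

theorem hasDerivAt_inv_apply {𝕜 : Type*} [RCLike 𝕜] {A : 𝕜 → Matrix n n 𝕜} {A' : Matrix n n 𝕜}
    {x : 𝕜} (hA : ∀ i j, HasDerivAt (fun t => A t i j) (A' i j) x) (hx : IsUnit (A x))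
    (i j : n) :
    HasDerivAt (fun t => (A t)⁻¹ i j) (-((A x)⁻¹ * A' * (A x)⁻¹) i j) x := by
  obtain ⟨u, hu⟩ := hx
  have hR := hasFDerivAt_ringInverse (𝕜 := 𝕜) u
  simp only [coe_units_inv, hu] at hR
  have hinv := hR.comp_hasDerivAt x (hasDerivAt_of_hasDerivAt_apply hA)
  simp only [Function.comp_def, ← nonsing_inv_eq_ringInverse, _root_.neg_apply,
    ContinuousLinearMap.mulLeftRight_apply] at hinv
  exact (entryLinearMap 𝕜 𝕜 i j).toContinuousLinearMap.hasFDerivAt.comp_hasDerivAt x hinv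

end LinftyOp

end Matrix

open Matrix

theorem hodge_star_variation_general
    (h h' S : ℝ → Matrix (Fin 3) (Fin 3) ℝ)
    (hpos : ∀ x, (h x).PosDef)
    (hderiv : ∀ x i j, HasDerivAt (fun t => h t i j) (h' x i j) x)
    (hS : ∀ x, (S x)ᵀ * h x = (-(1 / 2) : ℝ) • h' x) :
    ∀ x i j, HasDerivAt (fun t => (Real.sqrt (h t).det • (h t)⁻¹) i j)
      (((Real.sqrt (h x).det • (h x)⁻¹) *
        ((2 : ℝ) • (S x)ᵀ - (S x).trace • (1 : Matrix (Fin 3) (Fin 3) ℝ))) i j) x := by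
  intro x i j
  have hmul_inv : h x * (h x)⁻¹ = 1 := mul_nonsing_inv _ ((hpos x).isUnit.map detMonoidHom)
  have hh' : h' x = (-2 : ℝ) • ((S x)ᵀ * h x) := by
    rw [hS x, smul_smul]; norm_num
  have hvol : HasDerivAt (fun t => √(h t).det) (-(S x).trace * √(h x).det) x := by
    refine (hasDerivAt_sqrt_det (hderiv x) (hpos x).det_pos).congr_deriv ?_
    rw [hh', Matrix.mul_smul, trace_smul, ← Matrix.mul_assoc, trace_mul_cycle, hmul_inv,
      Matrix.one_mul, trace_transpose, smul_eq_mul]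
    ring
  have hinv : HasDerivAt (fun t => (h t)⁻¹ i j) (((2 : ℝ) • ((h x)⁻¹ * (S x)ᵀ)) i j) x := by
    refine (hasDerivAt_inv_apply (hderiv x) (hpos x).isUnit i j).congr_deriv ?_
    rw [hh', Matrix.mul_smul, Matrix.smul_mul, Matrix.mul_assoc, Matrix.mul_assoc, hmul_inv,
      Matrix.mul_one]
    simp
  refine (hvol.mul hinv).congr_deriv ?_
  simp only [Matrix.mul_sub, Matrix.mul_smul, Matrix.smul_mul, Matrix.mul_one, Matrix.sub_apply,
    Matrix.smul_apply, smul_eq_mul]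
  ring

/-- First variation of the Hodge star on 1-forms in dimension 3.  With `h(x)` a
smooth family of inner products on an oriented 3-dimensional vector space (Gram
matrices, symmetric positive definite, entrywise derivative `h'`) and the shape
operator `S(x)` defined by `S(x)ᵀ h(x) = −½ h'(x)`, the Hodge star
`⋆(x) : Λ¹ → Λ²` of `h(x)` — whose matrix in the bases `(dxⁱ)` of `Λ¹` and
`(½ε_{ijk} dxʲ∧dxᵏ)` of `Λ²` is `√(det h(x)) · h(x)⁻¹` — satisfies
`∂ₓ⋆ = ⋆ ∘ (2S* − tr S)`, where `S*` (matrix `Sᵀ`) is the dual of `S`. -/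
theorem hodge_star_variation
    (h h' S : ℝ → Matrix (Fin 3) (Fin 3) ℝ)
    (hsymm : ∀ x, (h x)ᵀ = h x)
    (hpos : ∀ x, (h x).PosDef)
    (hderiv : ∀ x i j, HasDerivAt (fun t => h t i j) (h' x i j) x)
    (hS : ∀ x, (S x)ᵀ * h x = (-(1 / 2) : ℝ) • h' x) :
    ∀ x i j, HasDerivAt (fun t => (Real.sqrt (h t).det • (h t)⁻¹) i j)
      (((Real.sqrt (h x).det • (h x)⁻¹) *
        ((2 : ℝ) • (S x)ᵀ - (S x).trace • (1 : Matrix (Fin 3) (Fin 3) ℝ))) i j) x :=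
  hodge_star_variation_general h h' S hpos hderiv hS
end
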